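/- arXiv:2307.11596 — 4 statements merged into one kernel-verified Lean document; each statement's English description precedes it below -/
import Mathlib

section
/- Let n be a natural number and (t, e) a permissible pair of elements of T_n. Then φ_{t,e} is idempotent (i.e. φ_{t,e}(φ_{t,e}(s)) = φ_{t,e}(s) for all s ∈ T_n) if and only if (t is an odd permutation and e ≠ id), or t = id, or t = e. -/
/-- `s : Fin n → Fin n` is an odd permutation if it is the underlying function of some
permutation of sign `-1`. -/
def IsOddPerm {n : ℕ} (s : Fin n → Fin n) : Prop :=
  ∃ σ : Equiv.Perm (Fin n), Equiv.Perm.sign σ = -1 ∧ ⇑σ = s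

/-- `s : Fin n → Fin n` is an even permutation if it is the underlying function of some
permutation of sign `1`. -/
def IsEvenPerm {n : ℕ} (s : Fin n → Fin n) : Prop :=
  ∃ σ : Equiv.Perm (Fin n), Equiv.Perm.sign σ = 1 ∧ ⇑σ = s

/-- A pair `(t, e)` of elements of `T_n` is permissible if `t ∘ t ∘ t = t` and
`t ∘ e = e ∘ t = e ∘ e = e`. -/
def Permissible {n : ℕ} (t e : Fin n → Fin n) : Prop :=
  t ∘ t ∘ t = t ∧ t ∘ e = e ∧ e ∘ t = e ∧ e ∘ e = e

open Classical in
/-- For a (permissible) pair `(t, e)`, the map `φ_{t,e} : T_n → T_n` sending `s` to `t` if `s`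
is an odd permutation, to `t ∘ t` if `s` is an even permutation, and to `e` if `s` is not
bijective. -/
noncomputable def phi {n : ℕ} (t e : Fin n → Fin n) : (Fin n → Fin n) → (Fin n → Fin n) :=
  fun s => if IsOddPerm s then t else if IsEvenPerm s then t ∘ t else e

/-- `φ : T_n → T_n` is a semigroup endomorphism of `T_n` if `φ (s ∘ s') = φ s ∘ φ s'`
for all `s, s'`. -/
def IsEndo {n : ℕ} (φ : (Fin n → Fin n) → (Fin n → Fin n)) : Prop :=
  ∀ s s' : Fin n → Fin n, φ (s ∘ s') = φ s ∘ φ s'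

lemma odd_bij {n : ℕ} {s : Fin n → Fin n} (h : IsOddPerm s) : Function.Bijective s := by
  obtain ⟨σ, _, rfl⟩ := h; exact σ.bijective

lemma even_bij {n : ℕ} {s : Fin n → Fin n} (h : IsEvenPerm s) : Function.Bijective s := by
  obtain ⟨σ, _, rfl⟩ := h; exact σ.bijective

lemma odd_not_even {n : ℕ} {s : Fin n → Fin n} (h : IsOddPerm s) : ¬ IsEvenPerm s := by
  obtain ⟨σ, hσ, hs⟩ := h
  rintro ⟨τ, hτ, hs'⟩
  have hστ : σ = τ := Equiv.coe_fn_injective (hs.trans hs'.symm)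
  rw [hστ, hτ] at hσ
  exact absurd hσ (by decide)

lemma bij_odd_or_even {n : ℕ} {s : Fin n → Fin n} (h : Function.Bijective s) :
    IsOddPerm s ∨ IsEvenPerm s := by
  set σ := Equiv.ofBijective s h with hσ
  rcases Int.units_eq_one_or (Equiv.Perm.sign σ) with h1 | h1
  · exact Or.inr ⟨σ, h1, rfl⟩
  · exact Or.inl ⟨σ, h1, rfl⟩

lemma phi_odd {n : ℕ} {t e s : Fin n → Fin n} (h : IsOddPerm s) : phi t e s = t := by
  simp [phi, h]

lemma phi_even {n : ℕ} {t e s : Fin n → Fin n} (h : IsEvenPerm s) : phi t e s = t ∘ t := by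
  simp [phi, h, odd_not_even]
  intro h'
  exact absurd h (odd_not_even h')

lemma phi_nonbij {n : ℕ} {t e s : Fin n → Fin n} (h : ¬ Function.Bijective s) :
    phi t e s = e := by
  have h1 : ¬ IsOddPerm s := fun h' => h (odd_bij h')
  have h2 : ¬ IsEvenPerm s := fun h' => h (even_bij h')
  simp [phi, h1, h2]

lemma not_odd_id {n : ℕ} : ¬ IsOddPerm (id : Fin n → Fin n) := by
  rintro ⟨σ, hσ, hs⟩
  have : σ = 1 := Equiv.coe_fn_injective (by simpa using hs)
  rw [this] at hσ; simp at hσ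

lemma even_id {n : ℕ} : IsEvenPerm (id : Fin n → Fin n) := ⟨1, by simp, by simp⟩

lemma even_sq_of_odd {n : ℕ} {t : Fin n → Fin n} (h : IsOddPerm t) : IsEvenPerm (t ∘ t) := by
  obtain ⟨σ, hσ, rfl⟩ := h
  exact ⟨σ * σ, by simp [hσ], by simp⟩

lemma idem_bij_eq_id {n : ℕ} {f : Fin n → Fin n} (hb : Function.Bijective f)
    (hf : f ∘ f = f) : f = id := by
  funext x
  exact hb.injective (congrFun hf x)

lemma phi_id_idem {n : ℕ} {e : Fin n → Fin n} (hee : e ∘ e = e) :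
    ∀ s : Fin n → Fin n, phi id e (phi id e s) = phi id e s := by
  intro s
  by_cases h1 : IsOddPerm s
  · rw [phi_odd h1, phi_even even_id]
    exact Function.comp_id id
  by_cases h2 : IsEvenPerm s
  · rw [phi_even h2]
    have hii : (id ∘ id : Fin n → Fin n) = id := rfl
    rw [hii, phi_even even_id]
    exact hii
  · have hb : ¬ Function.Bijective s := fun hb => (bij_odd_or_even hb).elim h1 h2
    rw [phi_nonbij hb]
    by_cases hbe : Function.Bijective e
    · rw [idem_bij_eq_id hbe hee, phi_even even_id]
      exact Function.comp_id id
    · rw [phi_nonbij hbe]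

/-- For a permissible pair `(t, e)`, the map `φ_{t,e}` is idempotent if and only
if (`t` is an odd permutation and `e ≠ id`), or `t = id`, or `t = e`. -/
theorem phi_idempotent_iff (n : ℕ) (t e : Fin n → Fin n) (h : Permissible t e) :
    (∀ s : Fin n → Fin n, phi t e (phi t e s) = phi t e s) ↔
      ((IsOddPerm t ∧ e ≠ id) ∨ t = id ∨ t = e) := by
  obtain ⟨h3, hte, het, hee⟩ := h
  by_cases hodd : IsOddPerm t
  · have hene : e ≠ id := by
      intro heid
      subst heid
      have : t = id := by simpa using hte
      rw [this] at hodd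
      exact not_odd_id hodd
    constructor
    · intro _; exact Or.inl ⟨hodd, hene⟩
    · intro _ s
      by_cases h1 : IsOddPerm s
      · rw [phi_odd h1, phi_odd hodd]
      by_cases h2 : IsEvenPerm s
      · rw [phi_even h2, phi_even (even_sq_of_odd hodd)]
      · have hb : ¬ Function.Bijective s := fun hb => (bij_odd_or_even hb).elim h1 h2
        rw [phi_nonbij hb]
        have heb : ¬ Function.Bijective e := by
          intro heb
          exact hene (idem_bij_eq_id heb hee)
        rw [phi_nonbij heb]
  · by_cases hn : n ≤ 1
    · have hall : ∀ f g : Fin n → Fin n, f = g := by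
        intro f g; funext x
        have := (f x).isLt; have := (g x).isLt
        exact Fin.ext (by omega)
      constructor
      · intro _; exact Or.inr (Or.inl (hall t id))
      · intro _ s; exact hall _ _
    · push_neg at hn
      have h01 : (⟨0, by omega⟩ : Fin n) ≠ ⟨1, by omega⟩ := by
        intro hne
        have := congrArg Fin.val hne
        simp at this
      have hswap : IsOddPerm (⇑(Equiv.swap (⟨0, by omega⟩ : Fin n) ⟨1, by omega⟩)) :=
        ⟨_, Equiv.Perm.sign_swap h01, rfl⟩
      by_cases hbt : Function.Bijective t
      · have heven : IsEvenPerm t := (bij_odd_or_even hbt).resolve_left hodd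
        constructor
        · intro hi
          have hs := hi (⇑(Equiv.swap (⟨0, by omega⟩ : Fin n) ⟨1, by omega⟩))
          rw [phi_odd hswap, phi_even heven] at hs
          exact Or.inr (Or.inl (idem_bij_eq_id hbt hs))
        · rintro (⟨ho, _⟩ | htid | hte')
          · exact absurd ho hodd
          · subst htid; exact phi_id_idem hee
          · have heid : e = id := idem_bij_eq_id (hte' ▸ hbt) hee
            intro s
            rw [hte', heid]
            exact phi_id_idem rfl s
      · have hbe : ¬ Function.Bijective e := by
          intro hbe
          apply hbt
          have htid : t = id := by
            funext x
            exact hbe.injective (congrFun het x)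
          rw [htid]; exact Function.bijective_id
        constructor
        · intro hi
          have hs := hi (⇑(Equiv.swap (⟨0, by omega⟩ : Fin n) ⟨1, by omega⟩))
          rw [phi_odd hswap, phi_nonbij hbt] at hs
          exact Or.inr (Or.inr hs.symm)
        · rintro (⟨ho, _⟩ | htid | hte')
          · exact absurd ho hodd
          · exact absurd (htid ▸ Function.bijective_id) hbt
          · intro s
            by_cases h1 : IsOddPerm s
            · rw [phi_odd h1, hte']
              exact phi_nonbij hbe
            by_cases h2 : IsEvenPerm s
            · rw [phi_even h2, hte', hee]
              exact phi_nonbij hbe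
            · have hb : ¬ Function.Bijective s := fun hb => (bij_odd_or_even hb).elim h1 h2
              rw [phi_nonbij hb, phi_nonbij hbe]
end

section
/- Let n be a natural number and let α, β be idempotent semigroup endomorphisms of T_n (i.e. α·α = α and β·β = β). Then: (i) the product α·β is idempotent (the idempotents form a band); (ii) if α and β have the same rank, i.e. (Set.range α).ncard = (Set.range β).ncard, then α·β = β (idempotents of equal rank form a right-zero semigroup); and (iii) if moreover n ≥ 5, then α·β·α = β·α (the idempotents form a left regular band). -/
open Equiv Equiv.Perm Function

namespace MonoidHom

variable {G H : Type*} [Group G] [Group H]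

theorem comp_eq_of_ker_le {f : G →* G} {g : G →* H} (hf : f.comp f = f) (h : f.ker ≤ g.ker) :
    g.comp f = g := by
  ext x
  have hx : f x * x⁻¹ ∈ f.ker := by
    rw [mem_ker, map_mul, map_inv, ← comp_apply, hf, mul_inv_cancel]
  simpa [mul_inv_eq_one] using h hx

theorem card_ker_eq_of_card_range_eq [Finite G] {f g : G →* H}
    (h : Nat.card f.range = Nat.card g.range) : Nat.card f.ker = Nat.card g.ker := by
  have hf := f.ker.card_mul_index
  have hg := g.ker.card_mul_index
  rw [Subgroup.index_ker] at hf hg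
  have hpos : 0 < Nat.card g.range := Nat.pos_of_mul_pos_left (hg ▸ Nat.card_pos)
  exact Nat.eq_of_mul_eq_mul_right hpos (by rw [← h, hf, h, hg])

variable {f g : G →* G}

theorem comp_eq_of_card_range_eq [Finite G] (hf : f.comp f = f)
    (hfg : f.ker ≤ g.ker ∨ g.ker ≤ f.ker) (h : Nat.card f.range = Nat.card g.range) :
    g.comp f = g := by
  refine comp_eq_of_ker_le hf (le_of_eq ?_)
  have hcard := card_ker_eq_of_card_range_eq h
  rcases hfg with hle | hle
  · exact Subgroup.eq_of_le_of_card_ge hle hcard.ge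
  · exact (Subgroup.eq_of_le_of_card_ge hle hcard.le).symm

theorem comp_comp_comp_eq_comp_of_ker_le_or_le (hf : f.comp f = f) (hg : g.comp g = g)
    (hfg : f.ker ≤ g.ker ∨ g.ker ≤ f.ker) : (g.comp f).comp (g.comp f) = g.comp f := by
  rcases hfg with hle | hle
  · rw [comp_eq_of_ker_le hf hle, hg]
  · rw [comp_assoc, ← comp_assoc f, comp_eq_of_ker_le hg hle, hf]

theorem comp_comp_eq_comp_of_ker_le_or_le (hf : f.comp f = f) (hg : g.comp g = g)
    (hfg : f.ker ≤ g.ker ∨ g.ker ≤ f.ker) : f.comp (g.comp f) = f.comp g := by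
  rcases hfg with hle | hle
  · rw [comp_eq_of_ker_le hf hle]
  · rw [← comp_assoc, comp_eq_of_ker_le hg hle, hf]

end MonoidHom

namespace Equiv.Perm

variable {α : Type*} [Fintype α] [DecidableEq α]

theorem alternatingGroup_le_of_isThreeCycle_mem {N : Subgroup (Perm α)} (hN : N.Normal)
    {t : Perm α} (ht : t.IsThreeCycle) (htN : t ∈ N) : alternatingGroup α ≤ N := by
  rw [← closure_three_cycles_eq_alternating, Subgroup.closure_le]
  intro s hs
  obtain ⟨g, rfl⟩ := isConj_iff.mp (isConj_iff_cycleType_eq.mpr (ht.trans hs.symm))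
  exact hN.conj_mem t htN g

theorem le_total_of_alternatingGroup_le {N M : Subgroup (Perm α)}
    (hN : alternatingGroup α ≤ N) (hM : alternatingGroup α ≤ M) : N ≤ M ∨ M ≤ N := by
  by_contra! h
  obtain ⟨x, hxN, hxM⟩ := SetLike.not_le_iff_exists.mp h.1
  obtain ⟨y, hyM, hyN⟩ := SetLike.not_le_iff_exists.mp h.2
  have hx : sign x = -1 := Int.units_ne_iff_eq_neg.mp fun hx => hxM (hM hx)
  have hy : sign y = -1 := Int.units_ne_iff_eq_neg.mp fun hy => hyN (hN hy)
  have hxy : x⁻¹ * y ∈ alternatingGroup α := by simp [mem_alternatingGroup, hx, hy]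
  exact hyN (by simpa using N.mul_mem hxN (hN hxy))

/-- For `S₄`, `V` is the Klein four-group; otherwise `V = {1}` will do. -/
theorem isChain_normal_of_subset (V : Set (Perm α)) (hVA : V ⊆ alternatingGroup α)
    (hlarge : ∀ N : Subgroup (Perm α), N.Normal → ¬(N : Set (Perm α)) ⊆ V →
      alternatingGroup α ≤ N)
    (hsmall : ∀ N : Subgroup (Perm α), N.Normal → (N : Set (Perm α)) ⊆ V → N ≠ ⊥ → V ⊆ N) :
    IsChain (· ≤ ·) {N : Subgroup (Perm α) | N.Normal} := by
  intro N hN M hM _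
  by_cases hNV : (N : Set (Perm α)) ⊆ V <;> by_cases hMV : (M : Set (Perm α)) ⊆ V
  · rcases eq_or_ne N ⊥ with rfl | hN_ne
    · exact Or.inl bot_le
    · exact Or.inr (hMV.trans (hsmall N hN hNV hN_ne))
  · exact Or.inl (hNV.trans (hVA.trans (hlarge M hM hMV)))
  · exact Or.inr (hMV.trans (hVA.trans (hlarge N hN hNV)))
  · exact le_total_of_alternatingGroup_le (hlarge N hN hNV) (hlarge M hM hMV)

theorem isChain_normal_of_forall_alternatingGroup_le
    (h : ∀ N : Subgroup (Perm α), N.Normal → N ≠ ⊥ → alternatingGroup α ≤ N) :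
    IsChain (· ≤ ·) {N : Subgroup (Perm α) | N.Normal} := by
  refine isChain_normal_of_subset {1} (by simp) (fun N hN hNV => h N hN ?_)
    (fun N _ _ _ => by simp)
  rintro rfl
  exact hNV (by simp)

set_option maxRecDepth 10000 in
theorem exists_conj_mul_isThreeCycle_of_le_four {k : ℕ} (hk3 : 3 ≤ k) (hk4 : k ≤ 4)
    (x : Perm (Fin k)) (hx : ¬(x ^ 2 = 1 ∧ sign x = 1)) : ∃ g, (g * x * g⁻¹ * x).IsThreeCycle := by
  simp_rw [← card_support_eq_three_iff]
  interval_cases k <;> revert x <;> decide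

set_option maxRecDepth 10000 in
theorem isConj_of_sq_eq_one_of_le_four {k : ℕ} (hk4 : k ≤ 4) (x y : Perm (Fin k))
    (hx : x ^ 2 = 1 ∧ sign x = 1) (hy : y ^ 2 = 1 ∧ sign y = 1) (hx1 : x ≠ 1) (hy1 : y ≠ 1) :
    IsConj x y := by
  rw [isConj_iff]
  interval_cases k <;> revert x y <;> decide

theorem isChain_normal_fin (n : ℕ) :
    IsChain (· ≤ ·) {N : Subgroup (Perm (Fin n)) | N.Normal} := by
  rcases le_or_gt n 2 with hn | hn
  · refine isChain_normal_of_forall_alternatingGroup_le fun N _ _ => ?_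
    rw [alternatingGroup.eq_bot_of_card_le_two (by simpa using hn)]
    exact bot_le
  rcases le_or_gt n 4 with hn4 | hn4
  · refine isChain_normal_of_subset {x | x ^ 2 = 1 ∧ sign x = 1} (fun x hx => hx.2)
      (fun N hN hNV => ?_) (fun N hN hNV hN_ne y hy => ?_)
    · obtain ⟨x, hxN, hxV⟩ := Set.not_subset.mp hNV
      obtain ⟨g, hg⟩ := exists_conj_mul_isThreeCycle_of_le_four hn hn4 x hxV
      exact alternatingGroup_le_of_isThreeCycle_mem hN hg
        (N.mul_mem (hN.conj_mem x hxN g) hxN)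
    · obtain ⟨x, hxN, hx1⟩ := (N.bot_or_exists_ne_one).resolve_left hN_ne
      rcases eq_or_ne y 1 with rfl | hy1
      · exact N.one_mem
      obtain ⟨g, rfl⟩ := isConj_iff.mp (isConj_of_sq_eq_one_of_le_four hn4 x y (hNV hxN) hy hx1 hy1)
      exact hN.conj_mem x hxN g
  · exact isChain_normal_of_forall_alternatingGroup_le fun N _ hN_ne =>
      alternatingGroup_le_of_normal (by simp; omega)
        ((Subgroup.nontrivial_iff_ne_bot _).mpr hN_ne)

end Equiv.Perm

theorem ncard_range_eq_card_range_add_one {X : Type*} [Finite X] {φ : (X → X) → (X → X)}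
    {F : Perm X →* Perm X} {E : X → X} (hF : ∀ σ : Perm X, φ σ = F σ)
    (hE : ∀ s, ¬Injective s → φ s = E) (hEi : ¬Injective E) :
    (Set.range φ).ncard = Nat.card F.range + 1 := by
  have hrange : Set.range φ = insert E (DFunLike.coe '' Set.range F) := by
    ext y
    constructor
    · rintro ⟨x, rfl⟩
      by_cases hx : Injective x
      · exact Or.inr ⟨_, ⟨.ofBijective x hx.bijective_of_finite, rfl⟩, (hF _).symm⟩
      · exact Or.inl (hE x hx)
    · rintro (hy | ⟨_, ⟨σ, rfl⟩, rfl⟩)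
      exacts [⟨E, (hE E hEi).trans hy.symm⟩, ⟨σ, hF σ⟩]
  have hE : E ∉ DFunLike.coe '' Set.range F := fun ⟨σ, _, hσ⟩ => hEi (hσ ▸ σ.injective)
  rw [hrange, Set.ncard_insert_of_notMem hE,
    Set.ncard_image_of_injective _ DFunLike.coe_injective, ← MonoidHom.coe_range,
    ← Nat.card_coe_set_eq]
  rfl

namespace IsEndo

variable {n : ℕ} {φ : (Fin n → Fin n) → (Fin n → Fin n)}

theorem map_id_comp (hφ : IsEndo φ) (s : Fin n → Fin n) : φ id ∘ φ s = φ s :=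
  (hφ id s).symm

theorem comp_map_id (hφ : IsEndo φ) (s : Fin n → Fin n) : φ s ∘ φ id = φ s :=
  (hφ s id).symm

theorem map_perm_mul (hφ : IsEndo φ) (σ τ : Perm (Fin n)) : φ ⇑(σ * τ) = φ σ ∘ φ τ :=
  hφ σ τ

theorem map_perm_inv_comp (hφ : IsEndo φ) (σ : Perm (Fin n)) : φ ⇑σ⁻¹ ∘ φ σ = φ id := by
  rw [← map_perm_mul hφ, inv_mul_cancel, coe_one]

theorem map_perm_comp_inv (hφ : IsEndo φ) (σ : Perm (Fin n)) : φ σ ∘ φ ⇑σ⁻¹ = φ id := by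
  rw [← map_perm_mul hφ, mul_inv_cancel, coe_one]

theorem map_const_eq_of_not_injective (hφ : IsEndo φ) (hφi : ¬Injective φ) (a b : Fin n) :
    φ (fun _ => a) = φ (fun _ => b) := by
  obtain ⟨x, y, hxy, hne⟩ := not_injective_iff.mp hφi
  obtain ⟨i, hi⟩ := ne_iff.mp hne
  have hxiyi : φ (fun _ => x i) = φ (fun _ => y i) := by
    rw [show (fun _ => x i) = x ∘ fun _ => i from rfl, hφ, hxy, ← hφ]; rfl
  set f : Fin n → Fin n := fun w => if w = x i then a else b
  calc φ (fun _ => a) = φ f ∘ φ (fun _ => x i) := by rw [← hφ]; simp [f, comp_def]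
    _ = φ f ∘ φ (fun _ => y i) := by rw [hxiyi]
    _ = φ (fun _ => b) := by rw [← hφ]; simp [f, comp_def, Ne.symm hi]

theorem const_comp_map [Nonempty (Fin n)] (hφ : IsEndo φ) {E : Fin n → Fin n}
    (hE : ∀ a, φ (fun _ => a) = E) (s : Fin n → Fin n) :
    E ∘ φ s = E := by
  obtain ⟨a⟩ := ‹Nonempty (Fin n)›
  rw [← hE a, ← hφ]; rfl

theorem map_comp_const [Nonempty (Fin n)] (hφ : IsEndo φ) {E : Fin n → Fin n}
    (hE : ∀ a, φ (fun _ => a) = E) (s : Fin n → Fin n) :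
    φ s ∘ E = E := by
  obtain ⟨a⟩ := ‹Nonempty (Fin n)›
  rw [← hE a, ← hφ]; exact (hE (s a)).trans (hE a).symm

def permKer (hφ : IsEndo φ) : Subgroup (Perm (Fin n)) where
  carrier := {σ | φ σ = φ id}
  mul_mem' {σ τ} hσ hτ := by
    change φ ⇑(σ * τ) = φ id
    rw [map_perm_mul hφ, hσ, hτ, map_id_comp hφ]
  one_mem' := rfl
  inv_mem' {σ} (hσ : φ σ = φ id) := by
    change φ ⇑σ⁻¹ = φ id
    rw [← map_perm_inv_comp hφ σ, hσ, comp_map_id hφ]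

theorem mem_permKer (hφ : IsEndo φ) {σ : Perm (Fin n)} : σ ∈ hφ.permKer ↔ φ σ = φ id :=
  Iff.rfl

theorem permKer_normal (hφ : IsEndo φ) : hφ.permKer.Normal where
  conj_mem σ hσ g := by
    rw [mem_permKer] at hσ ⊢
    rw [map_perm_mul hφ, map_perm_mul hφ, hσ, comp_map_id hφ, map_perm_comp_inv hφ]

/-- Each `φ σ` fixes the points of `range E` and permutes the fixed points of `φ id`, so an
injective restriction to `Sₙ` would embed `Sₙ` into the symmetric group on fewer than `n`
points. -/
theorem not_injective_map_perm [Nontrivial (Fin n)] (hφ : IsEndo φ) {E : Fin n → Fin n}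
    (hE : ∀ a, φ (fun _ => a) = E) : ¬Injective fun σ : Perm (Fin n) => φ σ := by
  intro hinj
  obtain ⟨a⟩ : Nonempty (Fin n) := inferInstance
  set u := φ id
  set p := E a
  have hu : ∀ x, u (u x) = u x := congrFun (map_id_comp hφ id)
  have hp : ∀ s, φ s p = p := fun s => congrFun (map_comp_const hφ hE s) a
  have hleft : ∀ (σ : Perm (Fin n)) x, φ ⇑σ⁻¹ (φ σ x) = u x :=
    fun σ => congrFun (map_perm_inv_comp hφ σ)
  let D := {x // u x = x ∧ x ≠ p}
  have hmaps (σ : Perm (Fin n)) (x : D) : u (φ σ x) = φ σ x ∧ φ σ x ≠ p := by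
    refine ⟨congrFun (map_id_comp hφ σ) x, fun h => x.2.2 ?_⟩
    rw [← x.2.1, ← hleft σ, h, hp]
  let restrict (σ : Perm (Fin n)) : D ↪ D :=
    ⟨fun x => ⟨φ σ x, hmaps σ x⟩, fun x y hxy => Subtype.ext <| by
      rw [← x.2.1, ← y.2.1, ← hleft σ, ← hleft σ]
      exact congrArg (φ ⇑σ⁻¹ ∘ Subtype.val) hxy⟩
  have hrestrict : Injective restrict := by
    refine fun σ τ h => hinj (funext fun x => ?_)
    change φ σ x = φ τ x
    rw [← comp_map_id hφ σ, ← comp_map_id hφ τ]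
    change φ σ (u x) = φ τ (u x)
    by_cases hx : u x = p
    · rw [hx, hp, hp]
    · exact congrArg Subtype.val (DFunLike.congr_fun h ⟨u x, hu x, hx⟩)
  have hD : Fintype.card D < n := by
    simpa using Fintype.card_lt_of_injective_of_notMem (Subtype.val : D → Fin n)
      Subtype.val_injective (b := p) (by simp)
  have hn : 2 ≤ n := Fin.nontrivial_iff_two_le.mp ‹_›
  have := Fintype.card_le_of_injective restrict hrestrict
  rw [Fintype.card_perm, Fintype.card_embedding_eq, Nat.descFactorial_self,
    Fintype.card_fin] at this
  have h1 := Nat.factorial_le (Nat.le_sub_one_of_lt hD)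
  have h2 : (n - 1).factorial < n.factorial := (Nat.factorial_lt (by omega)).mpr (by omega)
  omega

theorem permKer_ne_bot [Nontrivial (Fin n)] (hφ : IsEndo φ) {E : Fin n → Fin n}
    (hE : ∀ a, φ (fun _ => a) = E) : hφ.permKer ≠ ⊥ := by
  refine fun hK => not_injective_map_perm hφ hE fun σ τ h => ?_
  have : σ * τ⁻¹ ∈ hφ.permKer := by
    rw [mem_permKer, map_perm_mul hφ]
    exact (congrArg (· ∘ φ ⇑τ⁻¹) h).trans (map_perm_comp_inv hφ τ)
  rwa [hK, Subgroup.mem_bot, mul_inv_eq_one] at this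

theorem isPretransitive_permKer [Nontrivial (Fin n)] (hφ : IsEndo φ) {E : Fin n → Fin n}
    (hE : ∀ a, φ (fun _ => a) = E) : MulAction.IsPretransitive hφ.permKer (Fin n) := by
  have := hφ.permKer_normal
  refine MulAction.IsQuasiPreprimitive.isPretransitive_of_normal fun h => ?_
  obtain ⟨σ, hσ, hσ1⟩ := hφ.permKer.bot_or_exists_ne_one.resolve_left (permKer_ne_bot hφ hE)
  obtain ⟨x, hx⟩ := not_forall.mp (mt Equiv.ext hσ1)
  have hfix : x ∈ MulAction.fixedPoints hφ.permKer (Fin n) := h ▸ Set.mem_univ x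
  exact hx (hfix ⟨σ, hσ⟩)

theorem map_update_id [Nontrivial (Fin n)] (hφ : IsEndo φ) {E : Fin n → Fin n}
    (hE : ∀ a, φ (fun _ => a) = E) {a b : Fin n} (hab : a ≠ b) : φ (update id a b) = E := by
  set e := update id a b
  have := isPretransitive_permKer hφ hE
  have hstep (p : Fin n) : φ (update id p b) ∘ φ e = φ e := by
    obtain ⟨⟨σ, hσ⟩, hσp : σ p = a⟩ := MulAction.exists_smul_eq hφ.permKer p a
    have hconj : update id p b = ⇑σ⁻¹ ∘ update id a (σ b) ∘ σ := by
      ext x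
      rcases eq_or_ne x p with rfl | hxp
      · simp [hσp]
      · simp [hxp, ← hσp]
    have hfix : update id a (σ b) ∘ e = e := by
      ext x
      rcases eq_or_ne x a with rfl | hxa
      · simp [e, hab.symm]
      · simp [e, hxa]
    rw [mem_permKer] at hσ
    rw [hconj, hφ, hφ, (mem_permKer hφ).mp (inv_mem hσ), hσ, comp_map_id hφ, map_id_comp hφ,
      ← hφ, hfix]
  have hcollapse (t : Finset (Fin n)) : φ (t.piecewise (fun _ => b) id) ∘ φ e = φ e := by
    induction t using Finset.induction_on with
    | empty => simpa using map_id_comp hφ e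
    | insert p t hpt ih =>
      have : (insert p t).piecewise (fun _ => b) id =
          update id p b ∘ t.piecewise (fun _ => b) id := by
        ext x
        rcases eq_or_ne x p with rfl | hxp
        · simp [Finset.piecewise, hpt]
        · by_cases hx : x ∈ t <;> simp [Finset.piecewise, update_apply, hx, hxp]
      rw [this, hφ, comp_assoc, ih, hstep]
  have := hcollapse Finset.univ
  rwa [Finset.piecewise_univ, hE, const_comp_map hφ hE, eq_comm] at this

theorem map_of_not_injective [Nontrivial (Fin n)] (hφ : IsEndo φ) {E : Fin n → Fin n}
    (hE : ∀ a, φ (fun _ => a) = E) {s : Fin n → Fin n} (hs : ¬Injective s) : φ s = E := by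
  obtain ⟨p, q, hpq, hne⟩ := not_injective_iff.mp hs
  have hs : s ∘ update id p q = s := by rw [comp_update, comp_id, ← hpq, update_eq_self]
  calc φ s = φ s ∘ φ (update id p q) := by rw [← hφ, hs]
    _ = E := by rw [map_update_id hφ hE hne, map_comp_const hφ hE]

def toPermHom (hφ : IsEndo φ) (hu : φ id = id) : Perm (Fin n) →* Perm (Fin n) :=
  MonoidHom.mk'
    (fun σ => ⟨φ σ, φ ⇑σ⁻¹, congrFun ((map_perm_inv_comp hφ σ).trans hu),
      congrFun ((map_perm_comp_inv hφ σ).trans hu)⟩)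
    (fun σ τ => Equiv.ext (congrFun (map_perm_mul hφ σ τ)))

@[simp]
theorem coe_toPermHom (hφ : IsEndo φ) (hu : φ id = id) (σ : Perm (Fin n)) :
    ⇑(hφ.toPermHom hu σ) = φ σ :=
  rfl

theorem eq_id_or_eq_const_or_eq_toPermHom [Nontrivial (Fin n)] (hφ : IsEndo φ)
    (hidem : ∀ s, φ (φ s) = φ s) :
    φ = id ∨ (∃ f, φ = fun _ => f) ∨
      ∃ (F : Perm (Fin n) →* Perm (Fin n)) (E : Fin n → Fin n), F.comp F = F ∧
        (∀ σ : Perm (Fin n), φ σ = F σ) ∧ (∀ s, ¬Injective s → φ s = E) ∧ ¬Injective E := by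
  by_cases hφi : Injective φ
  · exact Or.inl (funext fun s => hφi (hidem s))
  obtain ⟨a⟩ : Nonempty (Fin n) := inferInstance
  set E := φ (fun _ => a)
  have hE (b : Fin n) : φ (fun _ => b) = E := map_const_eq_of_not_injective hφ hφi b a
  have hEφ := const_comp_map hφ hE
  by_cases hu : Injective (φ id)
  · replace hu : φ id = id := funext fun x => hu (congrFun (map_id_comp hφ id) x)
    by_cases hEi : Injective E
    · have hEid : E = id := funext fun x => hEi (congrFun (hEφ (fun _ => a)) x)
      exact Or.inr (Or.inl ⟨id, funext fun s => by simpa [hEid] using hEφ s⟩)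
    · refine Or.inr (Or.inr ⟨hφ.toPermHom hu, E, ?_, fun σ => (coe_toPermHom hφ hu σ).symm,
        fun s hs => map_of_not_injective hφ hE hs, hEi⟩)
      exact MonoidHom.ext fun σ => Equiv.ext (congrFun (hidem σ))
  · have huE : φ id = E := (hidem id).symm.trans (map_of_not_injective hφ hE hu)
    exact Or.inr (Or.inl ⟨E, funext fun s => by rw [← map_id_comp hφ s, huE, hEφ]⟩)

theorem comp_comp_comp_eq_comp [Nontrivial (Fin n)] {α β : (Fin n → Fin n) → (Fin n → Fin n)}
    (hα : IsEndo α) (hβ : IsEndo β) (hαi : ∀ s, α (α s) = α s) (hβi : ∀ s, β (β s) = β s)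
    (x : Fin n → Fin n) : β (α (β (α x))) = β (α x) := by
  rcases hβ.eq_id_or_eq_const_or_eq_toPermHom hβi with
    rfl | ⟨f, rfl⟩ | ⟨Fβ, Eβ, hFβ, hβσ, hβs, hEβ⟩
  · exact hαi x
  · rfl
  rcases hα.eq_id_or_eq_const_or_eq_toPermHom hαi with
    rfl | ⟨f, rfl⟩ | ⟨Fα, Eα, hFα, hασ, hαs, hEα⟩
  · exact hβi x
  · rfl
  by_cases hx : Injective x
  · obtain ⟨σ, rfl⟩ : ∃ σ : Perm (Fin n), ⇑σ = x := ⟨.ofBijective x hx.bijective_of_finite, rfl⟩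
    have hker := (isChain_normal_fin n).total Fα.normal_ker Fβ.normal_ker
    simp only [hασ, hβσ]
    exact congrArg DFunLike.coe
      (DFunLike.congr_fun (MonoidHom.comp_comp_comp_eq_comp_of_ker_le_or_le hFα hFβ hker) σ)
  · simp only [hαs x hx, hβs _ hEα, hαs _ hEβ]

theorem comp_comp_eq_comp [Nontrivial (Fin n)] {α β : (Fin n → Fin n) → (Fin n → Fin n)}
    (hα : IsEndo α) (hβ : IsEndo β) (hαi : ∀ s, α (α s) = α s) (hβi : ∀ s, β (β s) = β s)
    (x : Fin n → Fin n) : α (β (α x)) = α (β x) := by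
  rcases hα.eq_id_or_eq_const_or_eq_toPermHom hαi with
    rfl | ⟨f, rfl⟩ | ⟨Fα, Eα, hFα, hασ, hαs, hEα⟩
  · rfl
  · rfl
  rcases hβ.eq_id_or_eq_const_or_eq_toPermHom hβi with
    rfl | ⟨f, rfl⟩ | ⟨Fβ, Eβ, hFβ, hβσ, hβs, hEβ⟩
  · exact hαi x
  · rfl
  by_cases hx : Injective x
  · obtain ⟨σ, rfl⟩ : ∃ σ : Perm (Fin n), ⇑σ = x := ⟨.ofBijective x hx.bijective_of_finite, rfl⟩
    have hker := (isChain_normal_fin n).total Fα.normal_ker Fβ.normal_ker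
    simp only [hασ, hβσ]
    exact congrArg DFunLike.coe
      (DFunLike.congr_fun (MonoidHom.comp_comp_eq_comp_of_ker_le_or_le hFα hFβ hker) σ)
  · simp only [hαs x hx, hβs _ hEα, hαs _ hEβ, hβs x hx]

theorem comp_eq_of_ncard_range_eq [Nontrivial (Fin n)]
    {α β : (Fin n → Fin n) → (Fin n → Fin n)}
    (hα : IsEndo α) (hβ : IsEndo β) (hαi : ∀ s, α (α s) = α s) (hβi : ∀ s, β (β s) = β s)
    (h : (Set.range α).ncard = (Set.range β).ncard) : β ∘ α = β := by
  rcases hβ.eq_id_or_eq_const_or_eq_toPermHom hβi with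
    rfl | ⟨f, rfl⟩ | ⟨Fβ, Eβ, hFβ, hβσ, hβs, hEβ⟩
  · have hsurj : Set.range α = Set.univ :=
      Set.eq_of_subset_of_ncard_le (Set.subset_univ _) (by rw [h, Set.range_id])
    have hinj : Injective α := Finite.injective_iff_surjective.mpr (Set.range_eq_univ.mp hsurj)
    exact funext fun x => hinj (hαi x)
  · rfl
  rcases hα.eq_id_or_eq_const_or_eq_toPermHom hαi with
    rfl | ⟨f, rfl⟩ | ⟨Fα, Eα, hFα, hασ, hαs, hEα⟩
  · rfl
  · rw [Set.range_const, Set.ncard_singleton, ncard_range_eq_card_range_add_one hβσ hβs hEβ] at h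
    have : 0 < Nat.card Fβ.range := Nat.card_pos
    omega
  rw [ncard_range_eq_card_range_add_one hασ hαs hEα,
    ncard_range_eq_card_range_add_one hβσ hβs hEβ, Nat.add_right_cancel_iff] at h
  have hcomp := MonoidHom.comp_eq_of_card_range_eq hFα
    ((isChain_normal_fin n).total Fα.normal_ker Fβ.normal_ker) h
  funext x
  by_cases hx : Injective x
  · obtain ⟨σ, rfl⟩ : ∃ σ : Perm (Fin n), ⇑σ = x := ⟨.ofBijective x hx.bijective_of_finite, rfl⟩
    simp only [comp_apply, hασ, hβσ]
    exact congrArg DFunLike.coe (DFunLike.congr_fun hcomp σ)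
  · rw [comp_apply, hαs x hx, hβs _ hEα, hβs x hx]

end IsEndo

/-- For idempotent semigroup endomorphisms `α`, `β` of `T_n` (products written
left-to-right, `α·β = fun x => β (α x)`): (i) `α·β` is idempotent; (ii) if `α` and `β` have the
same rank then `α·β = β`; (iii) if `n ≥ 5` then `α·β·α = β·α`. -/
theorem idempotents_band (n : ℕ) (α β : (Fin n → Fin n) → (Fin n → Fin n))
    (hα : IsEndo α) (hβ : IsEndo β)
    (hαi : (fun x => α (α x)) = α) (hβi : (fun x => β (β x)) = β) :
    ((fun x => β (α (β (α x)))) = fun x => β (α x)) ∧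
      ((Set.range α).ncard = (Set.range β).ncard → (fun x => β (α x)) = β) ∧
      (5 ≤ n → (fun x => α (β (α x))) = fun x => α (β x)) := by
  have hαi' : ∀ s, α (α s) = α s := congrFun hαi
  have hβi' : ∀ s, β (β s) = β s := congrFun hβi
  rcases subsingleton_or_nontrivial (Fin n) with _ | _
  · exact ⟨Subsingleton.elim _ _, fun _ => Subsingleton.elim _ _, fun _ => Subsingleton.elim _ _⟩
  exact ⟨funext (hα.comp_comp_comp_eq_comp hβ hαi' hβi'),
    fun h => hα.comp_eq_of_ncard_range_eq hβ hαi' hβi' h,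
    fun _ => funext (hα.comp_comp_eq_comp hβ hαi' hβi')⟩
end

section
/- Let n ≥ 5. A semigroup endomorphism α of T_n is regular (i.e. there exists a semigroup endomorphism β with α·β·α = α) if and only if α is bijective (as a map T_n → T_n) or α is idempotent (α·α = α). Moreover, the regular elements are closed under products (if α and β are regular then α·β is regular), and there exists a semigroup endomorphism of T_n that is not regular. -/
open Function Equiv Equiv.Perm

theorem SignType.apply_apply_of_map_mul {f : SignType → SignType}
    (hf : ∀ a b, f (a * b) = f a * f b) (a : SignType) : f (f a) = f a := by
  revert f a
  decide

theorem SignType.sign_units_injective : Injective fun u : ℤˣ => SignType.sign (u : ℤ) := by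
  decide

theorem Finite.bijective_comp_iff {X : Type*} [Finite X] {f g : X → X} :
    Bijective (f ∘ g) ↔ Bijective f ∧ Bijective g :=
  ⟨fun h => ⟨Finite.surjective_iff_bijective.mp h.surjective.of_comp,
    Finite.injective_iff_bijective.mp h.injective.of_comp⟩, fun h => h.1.comp h.2⟩

theorem Function.update_id_comp_self {X : Type*} [DecidableEq X] {i v : X} (h : i ≠ v) :
    update id i v ∘ update id i v = update id i v := by
  rw [comp_update, comp_id, update_of_ne h.symm, id, update_idem]

theorem Equiv.Perm.comp_update_id_comp_inv {X : Type*} [DecidableEq X] (σ : Perm X) (i j : X) :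
    ⇑σ ∘ update id i j ∘ ⇑σ⁻¹ = update id (σ i) (σ j) := by
  funext x
  simp [update_apply, symm_apply_eq, apply_ite σ]

theorem Finset.piecewise_insert_const_id {X : Type*} [DecidableEq X] (A : Finset X) (j v : X) :
    (insert j A).piecewise (fun _ => v) id = A.piecewise (fun _ => v) id ∘ update id j v := by
  rw [Finset.piecewise_insert, comp_update, comp_id]
  congr 1
  by_cases hv : v ∈ A <;> simp [hv]

theorem Equiv.Perm.exists_sign_eq_one_apply_eq {n : ℕ} (hn : 4 ≤ n) {a b c d : Fin n}
    (hab : a ≠ b) (hcd : c ≠ d) :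
    ∃ σ : Perm (Fin n), sign σ = 1 ∧ σ a = c ∧ σ b = d := by
  have := alternatingGroup.isMultiplyPretransitive (Fin n)
  have : MulAction.IsMultiplyPretransitive (alternatingGroup (Fin n)) (Fin n) 2 :=
    MulAction.isMultiplyPretransitive_of_le (n := Nat.card (Fin n) - 2) (by simp; omega) (by simp)
  obtain ⟨g, hga, hgb⟩ := MulAction.is_two_pretransitive_iff.mp this hab hcd
  exact ⟨g, g.2, hga, hgb⟩

variable {n : ℕ} {α β : (Fin n → Fin n) → (Fin n → Fin n)}

noncomputable def signOrZero (s : Fin n → Fin n) : SignType :=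
  if h : Bijective s then SignType.sign (sign (ofBijective s h) : ℤ) else 0

theorem signOrZero_perm (σ : Perm (Fin n)) : signOrZero ⇑σ = SignType.sign (sign σ : ℤ) := by
  rw [signOrZero, dif_pos σ.bijective]
  congr
  ext
  rfl

theorem signOrZero_eq_zero_iff {s : Fin n → Fin n} : signOrZero s = 0 ↔ ¬ Bijective s := by
  refine ⟨fun h hs => ?_, fun hs => dif_neg hs⟩
  obtain ⟨σ, rfl⟩ : ∃ σ : Perm (Fin n), ⇑σ = s := ⟨ofBijective s hs, rfl⟩
  rcases Int.units_eq_one_or (sign σ) with hσ | hσ <;> simp [signOrZero_perm, hσ] at h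

theorem signOrZero_comp (s s' : Fin n → Fin n) :
    signOrZero (s ∘ s') = signOrZero s * signOrZero s' := by
  by_cases h : Bijective s ∧ Bijective s'
  · obtain ⟨σ, rfl⟩ : ∃ σ : Perm (Fin n), ⇑σ = s := ⟨ofBijective s h.1, rfl⟩
    obtain ⟨π, rfl⟩ : ∃ π : Perm (Fin n), ⇑π = s' := ⟨ofBijective s' h.2, rfl⟩
    rw [← coe_mul, signOrZero_perm, signOrZero_perm, signOrZero_perm, Perm.sign_mul,
      Units.val_mul, _root_.sign_mul]
  · rw [signOrZero_eq_zero_iff.mpr (Finite.bijective_comp_iff.not.mpr h)]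
    rcases not_and_or.mp h with h | h <;> simp [signOrZero_eq_zero_iff.mpr h]

theorem signOrZero_surjective (hn : 2 ≤ n) :
    Surjective (signOrZero : (Fin n → Fin n) → SignType) := by
  have h01 : (⟨0, by omega⟩ : Fin n) ≠ ⟨1, by omega⟩ := by simp [Fin.ext_iff]
  intro a
  cases a
  · exact ⟨fun _ => ⟨0, by omega⟩, signOrZero_eq_zero_iff.mpr fun h => h01 (h.1 rfl)⟩
  · exact ⟨Equiv.swap _ _, by rw [signOrZero_perm, sign_swap h01]; rfl⟩
  · exact ⟨⇑(1 : Perm (Fin n)), by rw [signOrZero_perm, map_one]; rfl⟩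

theorem exists_perm_sign_eq_iff_signOrZero {s : Fin n → Fin n} (u : ℤˣ) :
    (∃ σ : Perm (Fin n), sign σ = u ∧ ⇑σ = s) ↔
      signOrZero s = SignType.sign (u : ℤ) := by
  refine ⟨fun ⟨σ, hσ, hs⟩ => hs ▸ hσ ▸ signOrZero_perm σ, fun h => ?_⟩
  have hs : Bijective s := by
    by_contra hs
    rw [signOrZero_eq_zero_iff.mpr hs] at h
    rcases Int.units_eq_one_or u with rfl | rfl <;> simp at h
  exact ⟨ofBijective s hs, SignType.sign_units_injective
    ((signOrZero_perm (ofBijective s hs)).symm.trans h), rfl⟩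

theorem isOddPerm_iff_signOrZero {s : Fin n → Fin n} : IsOddPerm s ↔ signOrZero s = -1 :=
  (exists_perm_sign_eq_iff_signOrZero (-1)).trans (by simp)

theorem isEvenPerm_iff_signOrZero {s : Fin n → Fin n} : IsEvenPerm s ↔ signOrZero s = 1 :=
  (exists_perm_sign_eq_iff_signOrZero 1).trans (by simp)

theorem phi_of_isOddPerm {t e s : Fin n → Fin n} (hs : IsOddPerm s) : phi t e s = t :=
  if_pos hs

theorem phi_of_not_bijective {t e s : Fin n → Fin n} (hs : ¬ Bijective s) : phi t e s = e := by
  simp [phi, isOddPerm_iff_signOrZero, isEvenPerm_iff_signOrZero, signOrZero_eq_zero_iff.mpr hs]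

theorem Permissible.isEndo_phi {t e : Fin n → Fin n} (hp : Permissible t e) :
    IsEndo (phi t e) := by
  obtain ⟨h3, hte, het, hee⟩ := hp
  have h3' : (t ∘ t) ∘ t = t := h3
  have h4 : (t ∘ t) ∘ (t ∘ t) = t ∘ t := congrArg (· ∘ t) h3
  have htte : (t ∘ t) ∘ e = e := by rw [comp_assoc, hte, hte]
  have hett : e ∘ (t ∘ t) = e := by rw [← comp_assoc, het, het]
  intro s s'
  simp only [phi, isOddPerm_iff_signOrZero, isEvenPerm_iff_signOrZero, signOrZero_comp]
  generalize signOrZero s = a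
  generalize signOrZero s' = b
  cases a <;> cases b <;> simp [h3, h3', h4, hte, het, hee, htte, hett]

def IsRegularEndo (α : (Fin n → Fin n) → (Fin n → Fin n)) : Prop :=
  ∃ β, IsEndo β ∧ α ∘ β ∘ α = α

namespace IsEndo

theorem comp (hα : IsEndo α) (hβ : IsEndo β) : IsEndo (β ∘ α) := fun s s' =>
  (congrArg β (hα s s')).trans (hβ _ _)

theorem apply_id_comp (hα : IsEndo α) (s : Fin n → Fin n) : α id ∘ α s = α s := by
  rw [← hα, id_comp]

theorem comp_apply_id (hα : IsEndo α) (s : Fin n → Fin n) : α s ∘ α id = α s := by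
  rw [← hα, comp_id]

theorem apply_mul (hα : IsEndo α) (σ π : Perm (Fin n)) : α ⇑(σ * π) = α σ ∘ α π := by
  rw [coe_mul, hα]

theorem apply_inv_comp (hα : IsEndo α) (σ : Perm (Fin n)) : α ⇑σ⁻¹ ∘ α σ = α id := by
  rw [← apply_mul hα, inv_mul_cancel, coe_one]

theorem apply_comp_inv (hα : IsEndo α) (σ : Perm (Fin n)) : α σ ∘ α ⇑σ⁻¹ = α id := by
  rw [← apply_mul hα, mul_inv_cancel, coe_one]

theorem apply_id_of_surjective (hα : IsEndo α) (hs : Surjective α) : α id = id := by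
  obtain ⟨s, hs⟩ := hs id
  calc α id = α id ∘ α s := by rw [hs]; rfl
    _ = id := by rw [apply_id_comp hα, hs]

def toMonoidHom (hα : IsEndo α) (h1 : α id = id) :
    Function.End (Fin n) →* Function.End (Fin n) where
  toFun := α
  map_one' := h1
  map_mul' := hα

def permHom (hα : IsEndo α) (h1 : α id = id) : Perm (Fin n) →* Perm (Fin n) :=
  equivUnitsEnd.symm.toMonoidHom.comp
    ((Units.map (hα.toMonoidHom h1)).comp equivUnitsEnd.toMonoidHom)

theorem coe_permHom (hα : IsEndo α) (h1 : α id = id) (σ : Perm (Fin n)) :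
    ⇑(hα.permHom h1 σ) = α σ :=
  rfl

theorem bijective_permHom (hα : IsEndo α) (h1 : α id = id) (hinj : Injective α) :
    Bijective (hα.permHom h1) :=
  Finite.injective_iff_bijective.mp fun σ π h => coe_fn_injective <| hinj <| by
    rw [← coe_permHom hα h1, h, coe_permHom]

theorem signOrZero_apply_of_bijective (hn : 2 ≤ n) (hα : IsEndo α) (hb : Bijective α)
    (s : Fin n → Fin n) : signOrZero (α s) = signOrZero s := by
  have h1 := hα.apply_id_of_surjective hb.2
  have hφ := hα.bijective_permHom h1 hb.1
  by_cases hs : Bijective s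
  · obtain ⟨σ, rfl⟩ : ∃ σ : Perm (Fin n), ⇑σ = s := ⟨ofBijective s hs, rfl⟩
    have : Nontrivial (Fin n) := Fin.nontrivial_iff_two_le.mpr hn
    have hsign : sign.comp (hα.permHom h1) = sign :=
      eq_sign_of_surjective_hom ((sign_surjective (Fin n)).comp hφ.2)
    rw [← coe_permHom hα h1, signOrZero_perm, signOrZero_perm, ← MonoidHom.comp_apply, hsign]
  · rw [signOrZero_eq_zero_iff.mpr hs, signOrZero_eq_zero_iff]
    intro has
    obtain ⟨σ, hσ⟩ := hφ.2 (ofBijective (α s) has)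
    have : α σ = α s := congrArg DFunLike.coe hσ
    exact hs (hb.1 this ▸ σ.bijective)

theorem apply_const_eq_of_not_injective (hα : IsEndo α) (hinj : ¬ Injective α) (u w : Fin n) :
    α (fun _ => u) = α (fun _ => w) := by
  classical
  obtain ⟨a, b, hab, hne⟩ := not_injective_iff.mp hinj
  obtain ⟨x, hx⟩ := ne_iff.mp hne
  have key (g : Fin n → Fin n) : α (fun _ => g (a x)) = α (fun _ => g (b x)) := by
    change α (g ∘ a ∘ fun _ => x) = α (g ∘ b ∘ fun _ => x)
    rw [hα, hα, hab, ← hα, ← hα]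
  simpa [hx.symm] using key fun y => if y = a x then u else w

def permFix (hα : IsEndo α) : Perm (Fin n) →* Perm {x // α id x = x} where
  toFun σ :=
    { toFun := fun x => ⟨α σ x, congrFun (hα.apply_id_comp σ) x⟩
      invFun := fun x => ⟨α ⇑σ⁻¹ x, congrFun (hα.apply_id_comp _) x⟩
      left_inv := fun x => Subtype.ext ((congrFun (hα.apply_inv_comp σ) x).trans x.2)
      right_inv := fun x => Subtype.ext ((congrFun (hα.apply_comp_inv σ) x).trans x.2) }
  map_one' := Equiv.ext fun x => Subtype.ext x.2
  map_mul' σ π := Equiv.ext fun x => Subtype.ext (congrFun (hα.apply_mul σ π) x)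

theorem permFix_eq_one_iff (hα : IsEndo α) {σ : Perm (Fin n)} :
    hα.permFix σ = 1 ↔ α σ = α id := by
  refine ⟨fun h => funext fun x => ?_, fun h => Equiv.ext fun x => Subtype.ext ?_⟩
  · have hx := Equiv.ext_iff.mp h ⟨α id x, congrFun (hα.apply_id_comp id) x⟩
    exact (congrFun (hα.comp_apply_id σ) x).symm.trans (congrArg Subtype.val hx)
  · exact (congrFun h x).trans x.2

theorem not_injective_permFix (hn : 2 ≤ n) (hα : IsEndo α)
    (hc : ∀ u w : Fin n, α (fun _ => u) = α (fun _ => w)) : ¬ Injective hα.permFix := by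
  intro hinj
  have z : Fin n := ⟨0, by omega⟩
  let v : {x // α id x = x} := ⟨α (fun _ => z) z, congrFun (hα.apply_id_comp _) z⟩
  have hv (σ : Perm (Fin n)) : hα.permFix σ v = v :=
    Subtype.ext (congrFun ((hα _ _).symm.trans (hc (σ z) z)) z)
  -- By counting, an injective `permFix` would be onto; but no `permFix σ` moves `v`.
  have hcard := Fintype.card_le_of_injective _ hinj
  rw [Fintype.card_perm, Fintype.card_perm, Fintype.card_fin] at hcard
  have hk : Fintype.card {x // α id x = x} = n := by
    have hle := (Fintype.card_subtype_le (fun x : Fin n => α id x = x)).trans_eq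
      (Fintype.card_fin n)
    by_contra hne
    have hpos : 0 < Fintype.card {x // α id x = x} := Fintype.card_pos_iff.mpr ⟨v⟩
    exact absurd hcard (not_le.mpr ((Nat.factorial_lt hpos).mpr (lt_of_le_of_ne hle hne)))
  obtain ⟨w, hw⟩ := Fintype.exists_ne_of_one_lt_card (by omega) v
  have hsurj := ((Fintype.bijective_iff_injective_and_card _).mpr
    ⟨hinj, by rw [Fintype.card_perm, Fintype.card_perm, hk, Fintype.card_fin]⟩).2
  obtain ⟨σ, hσ⟩ := hsurj (Equiv.swap v w)
  have := hv σ
  rw [hσ, swap_apply_left] at this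
  exact hw this

section NotInjective

variable (hn : 5 ≤ n) (hα : IsEndo α) (hinj : ¬ Injective α)
include hn hα hinj

theorem apply_eq_of_sign_eq {σ π : Perm (Fin n)} (h : sign σ = sign π) : α σ = α π := by
  have hker : alternatingGroup (Fin n) ≤ hα.permFix.ker := by
    apply alternatingGroup_le_of_normal (by simpa using hn)
    rw [Subgroup.nontrivial_iff_ne_bot, ne_eq, MonoidHom.ker_eq_bot_iff]
    exact hα.not_injective_permFix (by omega) (hα.apply_const_eq_of_not_injective hinj)
  have hσπ : α ⇑(σ * π⁻¹) = α id :=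
    hα.permFix_eq_one_iff.mp (hker (by simp [mem_alternatingGroup, h]))
  rw [← inv_mul_cancel_right σ π, apply_mul hα, hσπ, apply_id_comp hα]

theorem apply_conj_eq {σ : Perm (Fin n)} (hσ : sign σ = 1) (g : Fin n → Fin n) :
    α (σ ∘ g ∘ ⇑σ⁻¹) = α g := by
  have h1 : α σ = α id := by
    simpa using apply_eq_of_sign_eq hn hα hinj (π := 1) (by simpa using hσ)
  have h1' : α ⇑σ⁻¹ = α id := by
    simpa using apply_eq_of_sign_eq hn hα hinj (σ := σ⁻¹) (π := 1) (by simpa using hσ)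
  rw [hα, hα, h1, h1', comp_apply_id hα, apply_id_comp hα]

theorem apply_update_id_eq {i j v : Fin n} (hi : i ≠ v) (hj : j ≠ v) :
    α (update id i v) = α (update id j v) := by
  obtain ⟨σ, hσ, hσi, hσv⟩ := exists_sign_eq_one_apply_eq (by omega) hi hj
  rw [← apply_conj_eq hn hα hinj hσ, comp_update_id_comp_inv, hσi, hσv]

theorem apply_update_id_eq_apply_const {i v : Fin n} (hiv : i ≠ v) :
    α (update id i v) = α (fun _ => v) := by
  have hcomp (j : Fin n) : α (update id j v) ∘ α (update id i v) = α (update id i v) := by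
    rcases eq_or_ne j v with rfl | hjv
    · rw [show update (id : Fin n → Fin n) j j = id from update_eq_self j id, apply_id_comp hα]
    · rw [apply_update_id_eq hn hα hinj hjv hiv, ← hα, update_id_comp_self hiv]
  -- The constant map `v` is the product of the idempotents `update id j v`, `j ∈ univ`.
  have key (A : Finset (Fin n)) :
      α (A.piecewise (fun _ => v) id) ∘ α (update id i v) = α (update id i v) := by
    induction A using Finset.induction_on with
    | empty => exact apply_id_comp hα _
    | insert j A _ ih => rw [Finset.piecewise_insert_const_id, hα, comp_assoc, hcomp, ih]
  rw [← key Finset.univ, Finset.piecewise_univ, ← hα]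
  rfl

theorem apply_eq_apply_const_of_not_injective {s : Fin n → Fin n} (hs : ¬ Injective s)
    (v : Fin n) : α s = α (fun _ => v) := by
  obtain ⟨i, j, hij, hne⟩ := not_injective_iff.mp hs
  have hs : s ∘ update id i j = s := by rw [comp_update, comp_id, ← hij, update_eq_self]
  calc α s = α s ∘ α (update id i j) := by rw [← hα, hs]
    _ = α (fun _ => s j) := by rw [apply_update_id_eq_apply_const hn hα hinj hne, ← hα]; rfl
    _ = α (fun _ => v) := hα.apply_const_eq_of_not_injective hinj _ _

theorem apply_eq_of_signOrZero_eq {s s' : Fin n → Fin n} (h : signOrZero s = signOrZero s') :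
    α s = α s' := by
  have hbij : Bijective s ↔ Bijective s' := by
    rw [← not_iff_not, ← signOrZero_eq_zero_iff, ← signOrZero_eq_zero_iff, h]
  by_cases hs : Bijective s
  · obtain ⟨σ, rfl⟩ : ∃ σ : Perm (Fin n), ⇑σ = s := ⟨ofBijective s hs, rfl⟩
    obtain ⟨π, rfl⟩ : ∃ π : Perm (Fin n), ⇑π = s' :=
      ⟨ofBijective s' (hbij.mp hs), rfl⟩
    rw [signOrZero_perm, signOrZero_perm] at h
    exact apply_eq_of_sign_eq hn hα hinj (SignType.sign_units_injective h)
  · have z : Fin n := ⟨0, by omega⟩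
    rw [apply_eq_apply_const_of_not_injective hn hα hinj
        (mt Finite.injective_iff_bijective.mp hs) z,
      apply_eq_apply_const_of_not_injective hn hα hinj
        (mt Finite.injective_iff_bijective.mp (mt hbij.mpr hs)) z]

end NotInjective

theorem signOrZero_apply_eq_of_signOrZero_eq (hn : 5 ≤ n) (hα : IsEndo α)
    {s s' : Fin n → Fin n} (h : signOrZero s = signOrZero s') :
    signOrZero (α s) = signOrZero (α s') := by
  by_cases hb : Bijective α
  · rw [hα.signOrZero_apply_of_bijective (by omega) hb,
      hα.signOrZero_apply_of_bijective (by omega) hb, h]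
  · rw [apply_eq_of_signOrZero_eq hn hα (Finite.injective_iff_bijective.not.mpr hb) h]

theorem signOrZero_apply_apply (hn : 5 ≤ n) (hα : IsEndo α) (s : Fin n → Fin n) :
    signOrZero (α (α s)) = signOrZero (α s) := by
  let r := surjInv (signOrZero_surjective (n := n) (by omega))
  have hr (k : SignType) : signOrZero (r k) = k := surjInv_eq _ k
  let f (k : SignType) : SignType := signOrZero (α (r k))
  have hf (s : Fin n → Fin n) : signOrZero (α s) = f (signOrZero s) :=
    hα.signOrZero_apply_eq_of_signOrZero_eq hn (hr _).symm
  have hfmul (a b : SignType) : f (a * b) = f a * f b := by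
    rw [← signOrZero_comp, ← hα, hf (r a ∘ r b), signOrZero_comp, hr, hr]
  rw [hf, hf s, SignType.apply_apply_of_map_mul hfmul]

theorem isRegularEndo_of_bijective (hα : IsEndo α) (hb : Bijective α) : IsRegularEndo α := by
  refine ⟨surjInv hb.2, fun s s' => hb.1 ?_, funext fun x => surjInv_eq hb.2 (α x)⟩
  rw [surjInv_eq hb.2, hα, surjInv_eq hb.2, surjInv_eq hb.2]

theorem isRegularEndo_of_comp_self (hα : IsEndo α) (h : α ∘ α = α) : IsRegularEndo α :=
  ⟨α, hα, by rw [h, h]⟩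

theorem comp_self_of_comp_comp_eq (hn : 5 ≤ n) (hα : IsEndo α) (hβ : IsEndo β)
    (hb : ¬ Bijective α) (hreg : α ∘ β ∘ α = α) : α ∘ α = α := by
  have hinj := mt Finite.injective_iff_bijective.mp hb
  funext x
  calc α (α x) = α (β (α (α x))) := (congrFun hreg (α x)).symm
    _ = α (β (α x)) := hα.apply_eq_of_signOrZero_eq hn hinj
      (hβ.signOrZero_apply_eq_of_signOrZero_eq hn (hα.signOrZero_apply_apply hn x))
    _ = α x := congrFun hreg x

theorem isRegularEndo_iff (hn : 5 ≤ n) (hα : IsEndo α) :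
    IsRegularEndo α ↔ Bijective α ∨ α ∘ α = α :=
  ⟨fun ⟨_, hβ, hreg⟩ => or_iff_not_imp_left.mpr fun hb =>
      hα.comp_self_of_comp_comp_eq hn hβ hb hreg,
    fun h => h.elim hα.isRegularEndo_of_bijective hα.isRegularEndo_of_comp_self⟩

theorem comp_comp_self_of_comp_self (hn : 5 ≤ n) (hα : IsEndo α) (hβ : IsEndo β)
    (hb : ¬ Bijective β) (hidem : β ∘ β = β) : (β ∘ α) ∘ (β ∘ α) = β ∘ α := by
  have hinj := mt Finite.injective_iff_bijective.mp hb
  funext x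
  calc β (α (β (α x))) = β (β (α (β (α x)))) := (congrFun hidem _).symm
    _ = β (β (α x)) :=
      hβ.apply_eq_of_signOrZero_eq hn hinj ((hα.comp hβ).signOrZero_apply_apply hn x)
    _ = β (α x) := congrFun hidem _

theorem comp_comp_self_of_bijective (hn : 5 ≤ n) (hα : IsEndo α) (hβ : IsEndo β)
    (hbα : ¬ Bijective α) (hidem : α ∘ α = α) (hbβ : Bijective β) :
    (β ∘ α) ∘ (β ∘ α) = β ∘ α := by
  have hinj := mt Finite.injective_iff_bijective.mp hbα
  have hαβ (y : Fin n → Fin n) : α (β y) = α y :=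
    hα.apply_eq_of_signOrZero_eq hn hinj (hβ.signOrZero_apply_of_bijective (by omega) hbβ y)
  funext x
  change β (α (β (α x))) = β (α x)
  rw [hαβ, ← comp_apply (f := α), hidem]

end IsEndo

theorem IsRegularEndo.comp (hn : 5 ≤ n) (hα : IsEndo α) (hβ : IsEndo β)
    (hrα : IsRegularEndo α) (hrβ : IsRegularEndo β) : IsRegularEndo (β ∘ α) := by
  rw [hα.isRegularEndo_iff hn] at hrα
  rw [hβ.isRegularEndo_iff hn] at hrβ
  rw [(hα.comp hβ).isRegularEndo_iff hn]
  by_cases hbβ : Bijective β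
  · by_cases hbα : Bijective α
    · exact Or.inl (hbβ.comp hbα)
    · exact Or.inr (hα.comp_comp_self_of_bijective hn hβ hbα (hrα.resolve_left hbα) hbβ)
  · exact Or.inr (hα.comp_comp_self_of_comp_self hn hβ hbβ (hrβ.resolve_left hbβ))

theorem exists_not_isRegularEndo (hn : 5 ≤ n) :
    ∃ α : (Fin n → Fin n) → (Fin n → Fin n), IsEndo α ∧ ¬ IsRegularEndo α := by
  let i : Fin n := ⟨0, by omega⟩
  let j : Fin n := ⟨1, by omega⟩
  let k : Fin n := ⟨2, by omega⟩
  have hij : i ≠ j := by simp [i, j, Fin.ext_iff]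
  have hkj : k ≠ j := by simp [k, j, Fin.ext_iff]
  have hki : k ≠ i := by simp [k, i, Fin.ext_iff]
  let t := update id i j
  let e : Fin n → Fin n := fun _ => j
  have hp : Permissible t e :=
    ⟨by rw [update_id_comp_self hij, update_id_comp_self hij],
      funext fun _ => update_of_ne hij.symm _ _, rfl, rfl⟩
  -- `phi t e` is constant on singular maps, and `t` is singular with `t ≠ e`: so `phi t e` is
  -- neither injective nor idempotent.
  refine ⟨phi t e, hp.isEndo_phi, fun hreg => ?_⟩
  have hsing {s : Fin n → Fin n} (hs : ¬ Injective s) : phi t e s = e :=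
    phi_of_not_bijective fun h => hs h.1
  rcases (hp.isEndo_phi.isRegularEndo_iff hn).mp hreg with hb | hidem
  · have h : (fun _ => i : Fin n → Fin n) = fun _ => j := hb.1 <| by
      rw [hsing fun h => hij (h rfl), hsing fun h => hij (h rfl)]
    exact hij (congrFun h i)
  · have hodd : IsOddPerm ⇑(swap i j) := ⟨swap i j, sign_swap hij, rfl⟩
    have h := congrFun hidem (swap i j)
    have ht : phi t e t = e := hsing fun h => hij (h (by simp [t, update_of_ne hij.symm]))
    rw [comp_apply, phi_of_isOddPerm hodd, ht] at h
    exact hkj ((update_of_ne hki j id).symm.trans (congrFun h k).symm)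

/-- For `n ≥ 5`: a semigroup endomorphism `α` of `T_n` is regular iff `α` is
bijective or idempotent; the regular elements are closed under products; and there exists a
non-regular semigroup endomorphism. -/
theorem regular_elements (n : ℕ) (hn : 5 ≤ n) :
    (∀ α : (Fin n → Fin n) → (Fin n → Fin n), IsEndo α →
      ((∃ β, IsEndo β ∧ (fun x => α (β (α x))) = α) ↔
        (Function.Bijective α ∨ (fun x => α (α x)) = α))) ∧
      (∀ α β : (Fin n → Fin n) → (Fin n → Fin n), IsEndo α → IsEndo β →
        (∃ γ, IsEndo γ ∧ (fun x => α (γ (α x))) = α) →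
        (∃ δ, IsEndo δ ∧ (fun x => β (δ (β x))) = β) →
        ∃ ρ, IsEndo ρ ∧
          (fun x => β (α (ρ (β (α x))))) = fun x => β (α x)) ∧
      (∃ α : (Fin n → Fin n) → (Fin n → Fin n), IsEndo α ∧
        ¬ ∃ β, IsEndo β ∧ (fun x => α (β (α x))) = α) :=
  ⟨fun _ hα => hα.isRegularEndo_iff hn,
    fun _ _ hα hβ hrα hrβ => IsRegularEndo.comp hn hα hβ hrα hrβ,
    exists_not_isRegularEndo hn⟩
end

section
/- Let n ≥ 5 and let (t, e) be a permissible pair of elements of T_n. Then the principal left ideal generated by φ_{t,e} in the endomorphism monoid equals a set of at most four elements: { γ·φ_{t,e} | γ a semigroup endomorphism of T_n } = { φ_{t,e}, φ_{t∘t, e}, φ_{e,e}, φ_{t∘t, t∘t} } (where each of the pairs (t∘t, e), (e, e) and (t∘t, t∘t) is permissible). -/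
section Aux

variable {n : ℕ}

lemma IsOddPerm.bijective {s : Fin n → Fin n} (h : IsOddPerm s) : Function.Bijective s := by
  obtain ⟨σ, -, rfl⟩ := h; exact σ.bijective

lemma IsEvenPerm.bijective {s : Fin n → Fin n} (h : IsEvenPerm s) : Function.Bijective s := by
  obtain ⟨σ, -, rfl⟩ := h; exact σ.bijective

lemma not_odd_and_even {s : Fin n → Fin n} (h1 : IsOddPerm s) (h2 : IsEvenPerm s) : False := by
  obtain ⟨σ, hσ, hs⟩ := h1
  obtain ⟨τ, hτ, ht⟩ := h2
  have hst : σ = τ := Equiv.coe_fn_injective (hs.trans ht.symm)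
  subst hst
  rw [hσ] at hτ
  exact absurd hτ (by decide)

lemma bijective_odd_or_even {s : Fin n → Fin n} (h : Function.Bijective s) :
    IsOddPerm s ∨ IsEvenPerm s := by
  rcases Int.units_eq_one_or (Equiv.Perm.sign (Equiv.ofBijective s h)) with h1 | h1
  · exact Or.inr ⟨Equiv.ofBijective s h, h1, rfl⟩
  · exact Or.inl ⟨Equiv.ofBijective s h, h1, rfl⟩

lemma bij_of_comp {s s' : Fin n → Fin n} (h : Function.Bijective (s ∘ s')) :
    Function.Bijective s ∧ Function.Bijective s' := by
  have h1 : Function.Surjective s := Function.Surjective.of_comp h.2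
  have h2 : Function.Injective s' := Function.Injective.of_comp h.1
  exact ⟨Finite.surjective_iff_bijective.mp h1, Finite.injective_iff_bijective.mp h2⟩

open Classical in
/-- The "class" of an element of `T_n` : `-1` for odd permutations, `1` for even ones,
`0` for non-bijective maps. -/
noncomputable def cl {n : ℕ} (s : Fin n → Fin n) : ℤ :=
  if IsOddPerm s then -1 else if IsEvenPerm s then 1 else 0

lemma cl_of_odd {s : Fin n → Fin n} (h : IsOddPerm s) : cl s = -1 := by
  simp [cl, h]

lemma cl_of_even {s : Fin n → Fin n} (h : IsEvenPerm s) : cl s = 1 := by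
  have h1 : ¬ IsOddPerm s := fun h1 => not_odd_and_even h1 h
  simp [cl, h, h1]

lemma cl_of_neither {s : Fin n → Fin n} (h1 : ¬ IsOddPerm s) (h2 : ¬ IsEvenPerm s) :
    cl s = 0 := by
  simp [cl, h1, h2]

lemma cl_of_nonbij {s : Fin n → Fin n} (h : ¬ Function.Bijective s) : cl s = 0 :=
  cl_of_neither (fun h1 => h h1.bijective) (fun h2 => h h2.bijective)

lemma cl_trichotomy (s : Fin n → Fin n) : cl s = -1 ∨ cl s = 0 ∨ cl s = 1 := by
  unfold cl; split_ifs <;> simp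

lemma odd_of_cl {s : Fin n → Fin n} (h : cl s = -1) : IsOddPerm s := by
  by_cases h1 : IsOddPerm s
  · exact h1
  · exfalso
    by_cases h2 : IsEvenPerm s
    · rw [cl_of_even h2] at h; norm_num at h
    · rw [cl_of_neither h1 h2] at h; norm_num at h

lemma even_of_cl {s : Fin n → Fin n} (h : cl s = 1) : IsEvenPerm s := by
  by_cases h2 : IsEvenPerm s
  · exact h2
  · exfalso
    by_cases h1 : IsOddPerm s
    · rw [cl_of_odd h1] at h; norm_num at h
    · rw [cl_of_neither h1 h2] at h; norm_num at h

lemma neither_of_cl_zero {s : Fin n → Fin n} (h : cl s = 0) :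
    ¬ IsOddPerm s ∧ ¬ IsEvenPerm s := by
  constructor
  · intro h1; rw [cl_of_odd h1] at h; norm_num at h
  · intro h2; rw [cl_of_even h2] at h; norm_num at h

lemma cl_coe (σ : Equiv.Perm (Fin n)) : cl ⇑σ = ((Equiv.Perm.sign σ : ℤˣ) : ℤ) := by
  rcases Int.units_eq_one_or (Equiv.Perm.sign σ) with h | h
  · rw [h, cl_of_even ⟨σ, h, rfl⟩]; rfl
  · rw [h, cl_of_odd ⟨σ, h, rfl⟩]; rfl

lemma cl_comp (s s' : Fin n → Fin n) : cl (s ∘ s') = cl s * cl s' := by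
  by_cases hs : Function.Bijective s
  · by_cases hs' : Function.Bijective s'
    · calc cl (s ∘ s') = cl ⇑(Equiv.ofBijective s hs * Equiv.ofBijective s' hs') := rfl
        _ = ((Equiv.Perm.sign (Equiv.ofBijective s hs * Equiv.ofBijective s' hs') : ℤˣ) : ℤ) :=
            cl_coe _
        _ = ((Equiv.Perm.sign (Equiv.ofBijective s hs) : ℤˣ) : ℤ) *
              ((Equiv.Perm.sign (Equiv.ofBijective s' hs') : ℤˣ) : ℤ) := by
            rw [Equiv.Perm.sign_mul]; exact Units.val_mul _ _
        _ = cl ⇑(Equiv.ofBijective s hs) * cl ⇑(Equiv.ofBijective s' hs') := by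
            rw [cl_coe, cl_coe]
        _ = cl s * cl s' := rfl
    · rw [cl_of_nonbij hs', cl_of_nonbij (fun hb => hs' (bij_of_comp hb).2), mul_zero]
  · rw [cl_of_nonbij hs, cl_of_nonbij (fun hb => hs (bij_of_comp hb).1), zero_mul]

lemma phi_of_odd (t e : Fin n → Fin n) {s : Fin n → Fin n} (h : IsOddPerm s) :
    phi t e s = t := by simp [phi, h]

lemma phi_of_even (t e : Fin n → Fin n) {s : Fin n → Fin n} (h : IsEvenPerm s) :
    phi t e s = t ∘ t := by
  have h1 : ¬ IsOddPerm s := fun h1 => not_odd_and_even h1 h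
  simp [phi, h, h1]

lemma phi_of_neither (t e : Fin n → Fin n) {s : Fin n → Fin n}
    (h1 : ¬ IsOddPerm s) (h2 : ¬ IsEvenPerm s) : phi t e s = e := by
  simp [phi, h1, h2]

lemma phi_congr_cl (t e : Fin n → Fin n) {u v : Fin n → Fin n} (h : cl u = cl v) :
    phi t e u = phi t e v := by
  rcases cl_trichotomy u with h0 | h0 | h0
  · rw [phi_of_odd t e (odd_of_cl h0), phi_of_odd t e (odd_of_cl (h.symm.trans h0))]
  · obtain ⟨a1, a2⟩ := neither_of_cl_zero h0
    obtain ⟨b1, b2⟩ := neither_of_cl_zero (h.symm.trans h0)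
    rw [phi_of_neither t e a1 a2, phi_of_neither t e b1 b2]
  · rw [phi_of_even t e (even_of_cl h0), phi_of_even t e (even_of_cl (h.symm.trans h0))]

lemma phi_ee {e : Fin n → Fin n} (h4 : e ∘ e = e) (x : Fin n → Fin n) :
    phi e e x = e := by
  by_cases ho : IsOddPerm x
  · exact phi_of_odd _ _ ho
  · by_cases hev : IsEvenPerm x
    · rw [phi_of_even _ _ hev, h4]
    · exact phi_of_neither _ _ ho hev

lemma phi_tt {t : Fin n → Fin n} (ht2 : (t ∘ t) ∘ (t ∘ t) = t ∘ t) (x : Fin n → Fin n) :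
    phi (t ∘ t) (t ∘ t) x = t ∘ t := by
  by_cases ho : IsOddPerm x
  · exact phi_of_odd _ _ ho
  · by_cases hev : IsEvenPerm x
    · rw [phi_of_even _ _ hev, ht2]
    · exact phi_of_neither _ _ ho hev

lemma phi_t2e_bij {t e : Fin n → Fin n} (ht2 : (t ∘ t) ∘ (t ∘ t) = t ∘ t)
    {x : Fin n → Fin n} (hb : Function.Bijective x) : phi (t ∘ t) e x = t ∘ t := by
  rcases bijective_odd_or_even hb with ho | hev
  · exact phi_of_odd _ _ ho
  · rw [phi_of_even _ _ hev, ht2]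

lemma phi_t2e_nb {t e : Fin n → Fin n} {x : Fin n → Fin n}
    (hb : ¬ Function.Bijective x) : phi (t ∘ t) e x = e :=
  phi_of_neither _ _ (fun ho => hb ho.bijective) (fun hev => hb hev.bijective)

lemma exists_perm_two {a b i j : Fin n} (hab : a ≠ b) (hij : i ≠ j) :
    ∃ π : Equiv.Perm (Fin n), π a = i ∧ π b = j := by
  refine ⟨Equiv.swap (Equiv.swap a i b) j * Equiv.swap a i, ?_, ?_⟩
  · have h1 : (Equiv.swap a i) a = i := Equiv.swap_apply_left a i
    show (Equiv.swap (Equiv.swap a i b) j) ((Equiv.swap a i) a) = i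
    rw [h1]
    apply Equiv.swap_apply_of_ne_of_ne
    · intro hc
      have hba : Equiv.swap a i b = Equiv.swap a i a := by
        rw [Equiv.swap_apply_left]; exact hc.symm
      exact hab ((Equiv.swap a i).injective hba).symm
    · exact hij
  · show (Equiv.swap (Equiv.swap a i b) j) ((Equiv.swap a i) b) = j
    exact Equiv.swap_apply_left _ j

lemma descent (hn0 : n ≠ 0) (C : (Fin n → Fin n) → ℤ)
    (hmul : ∀ s s', C (s ∘ s') = C s * C s')
    (hid : C id = 1) {z0 : Fin n}
    (hc0 : C (fun _ => z0) = 0) :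
    ∀ x : Fin n → Fin n, ¬ Function.Bijective x → C x = 0 := by
  have hpinv : ∀ π : Equiv.Perm (Fin n), C ⇑π * C ⇑π⁻¹ = 1 := by
    intro π
    rw [← hmul]
    have hcc : ⇑π ∘ ⇑π⁻¹ = id := by funext z; simp
    rw [hcc, hid]
  have hpne : ∀ π : Equiv.Perm (Fin n), C ⇑π ≠ 0 := by
    intro π h0
    have h2 := hpinv π
    rw [h0, zero_mul] at h2
    norm_num at h2
  have hconst : ∀ j : Fin n, C (fun _ : Fin n => j) = 0 := by
    intro j
    have hj : (fun _ : Fin n => j) = ⇑(Equiv.swap z0 j) ∘ (fun _ : Fin n => z0) := by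
      funext z; exact (Equiv.swap_apply_left z0 j).symm
    rw [hj, hmul, hc0, mul_zero]
  suffices H : ∀ r : ℕ, ∀ x : Fin n → Fin n, (Finset.univ.image x).card ≤ r →
      ¬ Function.Bijective x → C x = 0 by
    intro x hx
    exact H n x (by simpa using Finset.card_le_univ (Finset.univ.image x)) hx
  intro r
  induction r with
  | zero =>
    intro x hcard _
    exfalso
    have hm : x z0 ∈ Finset.univ.image x := Finset.mem_image_of_mem x (Finset.mem_univ z0)
    rw [Finset.card_eq_zero.mp (Nat.le_zero.mp hcard)] at hm
    exact absurd hm (Finset.notMem_empty _)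
  | succ r ih =>
    intro x hcard hbij
    by_contra hC
    have hninj : ¬ Function.Injective x := fun hi => hbij (Finite.injective_iff_bijective.mp hi)
    obtain ⟨i, j, hxij, hij⟩ := Function.not_injective_iff.mp hninj
    by_cases hr : (Finset.univ.image x).card ≤ 1
    · apply hC
      have hall : x = fun _ => x z0 := by
        funext z
        exact Finset.card_le_one.mp hr _ (Finset.mem_image_of_mem x (Finset.mem_univ z)) _
          (Finset.mem_image_of_mem x (Finset.mem_univ z0))
      rw [hall]; exact hconst _
    · push_neg at hr
      obtain ⟨a, ha, b, hb, hab⟩ := Finset.one_lt_card.mp hr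
      obtain ⟨π, hπa, hπb⟩ := exists_perm_two hab hij
      have hCy : C (x ∘ ⇑π ∘ x) ≠ 0 := by
        rw [hmul, hmul]
        exact mul_ne_zero hC (mul_ne_zero (hpne π) hC)
      have hiB : i ∈ (Finset.univ.image x).image ⇑π := by
        rw [← hπa]; exact Finset.mem_image_of_mem _ ha
      have hjB : j ∈ (Finset.univ.image x).image ⇑π := by
        rw [← hπb]; exact Finset.mem_image_of_mem _ hb
      have hsub1 : Finset.univ.image (x ∘ ⇑π ∘ x) ⊆
          ((Finset.univ.image x).image ⇑π).image x := by
        intro u hu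
        obtain ⟨z, -, hz⟩ := Finset.mem_image.mp hu
        rw [← hz]
        exact Finset.mem_image_of_mem x
          (Finset.mem_image_of_mem _ (Finset.mem_image_of_mem x (Finset.mem_univ z)))
      have hsub2 : ((Finset.univ.image x).image ⇑π).image x ⊆
          ((((Finset.univ.image x).image ⇑π)).erase j).image x := by
        intro u hu
        obtain ⟨w, hw, hwu⟩ := Finset.mem_image.mp hu
        by_cases hwj : w = j
        · subst hwj
          exact Finset.mem_image.mpr ⟨i, Finset.mem_erase.mpr ⟨hij, hiB⟩, hxij.trans hwu⟩
        · exact Finset.mem_image.mpr ⟨w, Finset.mem_erase.mpr ⟨hwj, hw⟩, hwu⟩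
      have hcB : ((Finset.univ.image x).image ⇑π).card ≤ r + 1 := by
        rw [Finset.card_image_of_injective _ π.injective]
        exact hcard
      have hcy : (Finset.univ.image (x ∘ ⇑π ∘ x)).card ≤ r := by
        calc (Finset.univ.image (x ∘ ⇑π ∘ x)).card
            ≤ (((((Finset.univ.image x).image ⇑π)).erase j).image x).card :=
              Finset.card_le_card (hsub1.trans hsub2)
          _ ≤ ((((Finset.univ.image x).image ⇑π)).erase j).card := Finset.card_image_le
          _ = ((Finset.univ.image x).image ⇑π).card - 1 := Finset.card_erase_of_mem hjB
          _ ≤ r := by omega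
      have hyb : ¬ Function.Bijective (x ∘ ⇑π ∘ x) := by
        intro hb'
        apply hninj
        have h1 : Function.Injective (⇑π ∘ x) := Function.Injective.of_comp (f := x) hb'.1
        exact Function.Injective.of_comp (f := ⇑π) h1
      exact absurd (ih (x ∘ ⇑π ∘ x) hcy hyb) hCy

lemma perm_cases (hn2 : 2 ≤ n) (C : (Fin n → Fin n) → ℤ)
    (hmul : ∀ s s', C (s ∘ s') = C s * C s')
    (hid : C id = 1) :
    (∀ σ : Equiv.Perm (Fin n), C ⇑σ = 1) ∨
      (∀ σ : Equiv.Perm (Fin n), C ⇑σ = ((Equiv.Perm.sign σ : ℤˣ) : ℤ)) := by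
  have h0n : 0 < n := by omega
  have h1n : 1 < n := by omega
  set z0 : Fin n := ⟨0, h0n⟩ with hz0
  set z1 : Fin n := ⟨1, h1n⟩ with hz1
  have hz01 : z0 ≠ z1 := fun hq => by simpa [hz0, hz1] using congrArg Fin.val hq
  have hpinv : ∀ π : Equiv.Perm (Fin n), C ⇑π * C ⇑π⁻¹ = 1 := by
    intro π
    rw [← hmul]
    have hcc : ⇑π ∘ ⇑π⁻¹ = id := by funext z; simp
    rw [hcc, hid]
  have hvv : C ⇑(Equiv.swap z0 z1) * C ⇑(Equiv.swap z0 z1) = 1 := by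
    rw [← hmul]
    have hss : ⇑(Equiv.swap z0 z1) ∘ ⇑(Equiv.swap z0 z1) = id := by
      funext z; simp
    rw [hss, hid]
  have hswap : ∀ x y : Fin n, x ≠ y → C ⇑(Equiv.swap x y) = C ⇑(Equiv.swap z0 z1) := by
    intro x y hxy
    obtain ⟨π, hπ1, hπ2⟩ := exists_perm_two hz01 hxy
    have hconj : Equiv.swap x y = π * Equiv.swap z0 z1 * π⁻¹ := by
      rw [← hπ1, ← hπ2]
      exact Equiv.swap_apply_apply π z0 z1
    rw [hconj, Equiv.Perm.coe_mul, Equiv.Perm.coe_mul, hmul, hmul]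
    linear_combination C ⇑(Equiv.swap z0 z1) * hpinv π
  rcases mul_self_eq_one_iff.mp hvv with hv1 | hv1
  · left
    intro σ
    refine Equiv.Perm.swap_induction_on σ ?_ ?_
    · rw [Equiv.Perm.coe_one]; exact hid
    · intro f x y hxy ih
      rw [Equiv.Perm.coe_mul, hmul, hswap x y hxy, hv1, ih, one_mul]
  · right
    intro σ
    refine Equiv.Perm.swap_induction_on σ ?_ ?_
    · rw [Equiv.Perm.coe_one, Equiv.Perm.sign_one]; rw [hid]; rfl
    · intro f x y hxy ih
      rw [Equiv.Perm.coe_mul, hmul, hswap x y hxy, hv1, ih,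
        Equiv.Perm.sign_mul, Equiv.Perm.sign_swap hxy, Units.val_mul,
        Units.coe_neg_one]

lemma classify (hn : 5 ≤ n) (C : (Fin n → Fin n) → ℤ)
    (hmul : ∀ s s', C (s ∘ s') = C s * C s')
    (hrange : ∀ s, C s = -1 ∨ C s = 0 ∨ C s = 1) :
    (∀ s, C s = 0) ∨ (∀ s, C s = 1) ∨ (∀ s, C s = cl s) ∨
      (∀ s, C s = if Function.Bijective s then 1 else 0) := by
  have hidem : C (id : Fin n → Fin n) = C id * C id := by
    have h2 := hmul (id : Fin n → Fin n) id
    rwa [Function.comp_id] at h2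
  rcases hrange id with hid | hid | hid
  · rw [hid] at hidem; norm_num at hidem
  · left
    intro s
    have h2 := hmul s id
    rwa [Function.comp_id, hid, mul_zero] at h2
  · have h0n : 0 < n := by omega
    set z0 : Fin n := ⟨0, h0n⟩ with hz0
    have hpinv : ∀ π : Equiv.Perm (Fin n), C ⇑π * C ⇑π⁻¹ = 1 := by
      intro π
      rw [← hmul]
      have hcc : ⇑π ∘ ⇑π⁻¹ = id := by funext z; simp
      rw [hcc, hid]
    have hpne : ∀ π : Equiv.Perm (Fin n), C ⇑π ≠ 0 := by
      intro π h0
      have h2 := hpinv π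
      rw [h0, zero_mul] at h2
      norm_num at h2
    have hccc : C (fun _ : Fin n => z0) = C (fun _ : Fin n => z0) * C (fun _ : Fin n => z0) :=
      hmul (fun _ : Fin n => z0) (fun _ : Fin n => z0)
    rcases hrange (fun _ : Fin n => z0) with hc | hc | hc
    · rw [hc] at hccc; norm_num at hccc
    · have hsing : ∀ x : Fin n → Fin n, ¬ Function.Bijective x → C x = 0 :=
        descent (by omega) C hmul hid hc
      rcases perm_cases (by omega) C hmul hid with hp | hp
      · right; right; right
        intro s
        by_cases hb : Function.Bijective s
        · rw [if_pos hb]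
          exact hp (Equiv.ofBijective s hb)
        · rw [if_neg hb]; exact hsing s hb
      · right; right; left
        intro s
        by_cases hb : Function.Bijective s
        · rcases bijective_odd_or_even hb with ho | hev
          · obtain ⟨σ, hs, hco⟩ := ho
            rw [cl_of_odd ⟨σ, hs, hco⟩, ← hco, hp σ, hs]
            rfl
          · obtain ⟨σ, hs, hco⟩ := hev
            rw [cl_of_even ⟨σ, hs, hco⟩, ← hco, hp σ, hs]
            rfl
        · rw [cl_of_nonbij hb]; exact hsing s hb
    · right; left
      intro s
      have hconstj : (fun _ : Fin n => s z0) =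
          ⇑(Equiv.swap z0 (s z0)) ∘ (fun _ : Fin n => z0) := by
        funext z; simp
      have hne : C (fun _ : Fin n => s z0) ≠ 0 := by
        rw [hconstj, hmul, hc, mul_one]
        exact hpne _
      have hid2 : C (fun _ : Fin n => s z0) =
          C (fun _ : Fin n => s z0) * C (fun _ : Fin n => s z0) :=
        hmul (fun _ : Fin n => s z0) (fun _ : Fin n => s z0)
      have h1 : C (fun _ : Fin n => s z0) = 1 := by
        rcases hrange (fun _ : Fin n => s z0) with hx | hx | hx
        · rw [hx] at hid2; norm_num at hid2
        · exact absurd hx hne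
        · exact hx
      have h2 := hmul s (fun _ : Fin n => z0)
      rw [hc, mul_one] at h2
      have h5 : C (s ∘ fun _ : Fin n => z0) = C (fun _ : Fin n => s z0) := rfl
      rw [h5, h1] at h2
      exact h2.symm

end Aux

/-- For `n ≥ 5` and a permissible pair `(t, e)`, the principal left ideal
generated by `φ_{t,e}` equals `{φ_{t,e}, φ_{t∘t, e}, φ_{e,e}, φ_{t∘t, t∘t}}`, where each of the
pairs `(t∘t, e)`, `(e, e)` and `(t∘t, t∘t)` is permissible. -/
theorem principal_left_ideal (n : ℕ) (hn : 5 ≤ n) (t e : Fin n → Fin n)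
    (h : Permissible t e) :
    {ψ : (Fin n → Fin n) → (Fin n → Fin n) |
        ∃ γ, IsEndo γ ∧ ψ = fun x => phi t e (γ x)} =
      {phi t e, phi (t ∘ t) e, phi e e, phi (t ∘ t) (t ∘ t)} ∧
      Permissible (t ∘ t) e ∧ Permissible e e ∧ Permissible (t ∘ t) (t ∘ t) := by
  obtain ⟨h1, h2, h3, h4⟩ := h
  have ht3 : ∀ z, t (t (t z)) = t z := fun z => congrFun h1 z
  have hte : ∀ z, t (e z) = e z := fun z => congrFun h2 z
  have het : ∀ z, e (t z) = e z := fun z => congrFun h3 z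
  have hee : ∀ z, e (e z) = e z := fun z => congrFun h4 z
  have ht2 : (t ∘ t) ∘ (t ∘ t) = t ∘ t := funext fun z => ht3 (t z)
  have hperm1 : Permissible (t ∘ t) e := by
    refine ⟨funext fun z => ?_, funext fun z => ?_, funext fun z => ?_, h4⟩
    · show t (t (t (t (t (t z))))) = t (t z)
      rw [ht3 z, ht3 (t z)]
    · show t (t (e z)) = e z
      rw [hte z, hte z]
    · show e (t (t z)) = e z
      rw [het (t z), het z]
  have hperm2 : Permissible e e := by
    refine ⟨funext fun z => ?_, h4, h4, h4⟩
    show e (e (e z)) = e z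
    rw [hee z, hee z]
  have hperm3 : Permissible (t ∘ t) (t ∘ t) := by
    refine ⟨?_, ht2, ht2, ht2⟩
    show (t ∘ t) ∘ (t ∘ t) ∘ (t ∘ t) = t ∘ t
    rw [ht2, ht2]
  refine ⟨?_, hperm1, hperm2, hperm3⟩
  have h0n : 0 < n := by omega
  have h1n : 1 < n := by omega
  set z0 : Fin n := ⟨0, h0n⟩ with hz0
  set z1 : Fin n := ⟨1, h1n⟩ with hz1
  have hz01 : z0 ≠ z1 := fun hq => by simpa [hz0, hz1] using congrArg Fin.val hq
  have hc0nb : ¬ Function.Bijective (fun _ : Fin n => z0) := fun hb =>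
    hz01 (hb.1 (rfl : (fun _ : Fin n => z0) z0 = (fun _ : Fin n => z0) z1))
  have hc0no : ¬ IsOddPerm (fun _ : Fin n => z0) := fun ho => hc0nb ho.bijective
  have hc0ne : ¬ IsEvenPerm (fun _ : Fin n => z0) := fun hev => hc0nb hev.bijective
  have hidev : IsEvenPerm (id : Fin n → Fin n) := ⟨1, Equiv.Perm.sign_one, rfl⟩
  ext ψ
  simp only [Set.mem_setOf_eq, Set.mem_insert_iff, Set.mem_singleton_iff]
  constructor
  · rintro ⟨γ, hγ, rfl⟩
    have hmulC : ∀ s s' : Fin n → Fin n, cl (γ (s ∘ s')) = cl (γ s) * cl (γ s') := by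
      intro s s'; rw [hγ s s', cl_comp]
    rcases classify hn (fun s => cl (γ s)) hmulC (fun s => cl_trichotomy (γ s)) with H | H | H | H
    · right; right; left
      funext x
      obtain ⟨hu1, hu2⟩ := neither_of_cl_zero (H x)
      rw [phi_of_neither t e hu1 hu2]
      exact (phi_ee h4 x).symm
    · right; right; right
      funext x
      rw [phi_of_even t e (even_of_cl (H x))]
      exact (phi_tt ht2 x).symm
    · left
      funext x
      exact phi_congr_cl t e (H x)
    · right; left
      funext x
      by_cases hb : Function.Bijective x
      · have hx1 : cl (γ x) = 1 := by rw [H x, if_pos hb]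
        rw [phi_of_even t e (even_of_cl hx1)]
        exact (phi_t2e_bij ht2 hb).symm
      · have hx0 : cl (γ x) = 0 := by rw [H x, if_neg hb]
        obtain ⟨hu1, hu2⟩ := neither_of_cl_zero hx0
        rw [phi_of_neither t e hu1 hu2]
        exact (phi_t2e_nb hb).symm
  · intro hmem
    have hg2bij : ∀ u : Fin n → Fin n, Function.Bijective u →
        phi id (fun _ : Fin n => z0) u = id := by
      intro u hu
      rcases bijective_odd_or_even hu with ho | hev
      · exact phi_of_odd _ _ ho
      · rw [phi_of_even _ _ hev]; rfl
    have hg2nb : ∀ u : Fin n → Fin n, ¬ Function.Bijective u →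
        phi id (fun _ : Fin n => z0) u = (fun _ : Fin n => z0) := fun u hu =>
      phi_of_neither _ _ (fun ho => hu ho.bijective) (fun hev => hu hev.bijective)
    rcases hmem with rfl | rfl | rfl | rfl
    · exact ⟨id, fun s s' => rfl, rfl⟩
    · refine ⟨phi id (fun _ : Fin n => z0), ?_, ?_⟩
      · intro s s'
        by_cases hs : Function.Bijective s
        · by_cases hs' : Function.Bijective s'
          · rw [hg2bij _ (hs.comp hs'), hg2bij _ hs, hg2bij _ hs']; rfl
          · rw [hg2nb _ (fun hb => hs' (bij_of_comp hb).2), hg2bij _ hs, hg2nb _ hs']; rfl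
        · rw [hg2nb _ (fun hb => hs (bij_of_comp hb).1), hg2nb _ hs]
          by_cases hs' : Function.Bijective s'
          · rw [hg2bij _ hs']; rfl
          · rw [hg2nb _ hs']; rfl
      · funext x
        by_cases hb : Function.Bijective x
        · rw [phi_t2e_bij ht2 hb, hg2bij _ hb, phi_of_even t e hidev]
        · rw [phi_t2e_nb hb, hg2nb _ hb, phi_of_neither t e hc0no hc0ne]
    · refine ⟨fun _ => (fun _ : Fin n => z0), fun s s' => rfl, ?_⟩
      funext x
      rw [phi_ee h4 x]
      exact (phi_of_neither t e hc0no hc0ne).symm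
    · refine ⟨fun _ => (id : Fin n → Fin n), fun s s' => rfl, ?_⟩
      funext x
      rw [phi_tt ht2 x]
      exact (phi_of_even t e hidev).symm
end
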